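/- Let H be a complex Hilbert space with dim H ≥ 2, let (Tₙ) be a sequence of nonzero bounded linear operators on H with ε̂(Tₙ) → 0, and let λₙ ∈ [m(Tₙ), ‖Tₙ‖] for each n. Then dist(Tₙ/λₙ, 𝒱) → 0, where 𝒱 is the set of linear isometries on H. -/

import Mathlib

open scoped ComplexInnerProductSpace

noncomputable section

variable {H : Type*} [NormedAddCommGroup H] [InnerProductSpace ℂ H] [CompleteSpace H]

/-- `T` is `ε`-approximately orthogonality preserving: orthogonal vectors are mapped to
`ε`-orthogonal vectors. -/
def IsAOP (T : H →L[ℂ] H) (ε : ℝ) : Prop :=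
  ∀ x y : H, ⟪x, y⟫ = 0 → ‖⟪T x, T y⟫‖ ≤ ε * (‖T x‖ * ‖T y‖)

/-- `ε̂(T)`, the smallest `ε ∈ [0,1]` for which `T` is `ε`-AOP. -/
def epsHat (T : H →L[ℂ] H) : ℝ :=
  sInf {ε : ℝ | 0 ≤ ε ∧ ε ≤ 1 ∧ IsAOP T ε}

/-- The minimum modulus `m(T) = inf {‖T x‖ : ‖x‖ = 1}`. -/
def minMod (T : H →L[ℂ] H) : ℝ :=
  sInf {r : ℝ | ∃ x : H, ‖x‖ = 1 ∧ ‖T x‖ = r}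

/-- The set `ℂ𝒱` of scalar multiples of linear isometries of `H`. -/
def scalarIsoms (H : Type*) [NormedAddCommGroup H] [InnerProductSpace ℂ H] :
    Set (H →L[ℂ] H) :=
  {S | ∃ (c : ℂ) (V : H →L[ℂ] H), (∀ x : H, ‖V x‖ = ‖x‖) ∧ S = c • V}

/-- `dist(T, ℂ𝒱)`. -/
def distCV (T : H →L[ℂ] H) : ℝ := Metric.infDist T (scalarIsoms H)

/-- The set `𝒱` of linear isometries of `H`. -/
def isoms (H : Type*) [NormedAddCommGroup H] [InnerProductSpace ℂ H] :
    Set (H →L[ℂ] H) :=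
  {V | ∀ x : H, ‖V x‖ = ‖x‖}

/-- `dist(T, 𝒱)`. -/
def distV (T : H →L[ℂ] H) : ℝ := Metric.infDist T (isoms H)

/-!
If `T` is `η`-AOP, then for orthogonal `x`, `y` of equal length the vectors `x + y` and `x - y` are
orthogonal, and the real part of `⟪T (x + y), T (x - y)⟫` is `‖T x‖² - ‖T y‖²`; so
`‖T x‖ ≈ ‖T y‖`. Splitting any `y` along a unit vector `x` and
its orthogonal complement turns this into `(1 - 3η) ‖T‖² ‖y‖² ≤ ‖T y‖²`, which pins `m(T)`, hence
`λ`, close to `‖T‖`. For `a = λ⁻¹ T` this gives `‖a⋆a - 1‖ ≤ (1 - 3η)⁻¹ - 1`, since the norm of a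
self-adjoint operator is the supremum of its Rayleigh quotient. When `‖a⋆a - 1‖ < 1`, the polar
factor `v = a (a⋆a)^(-1/2)` is an isometry and `‖a - v‖ ≤ ‖(a⋆a)^(1/2) - 1‖ ≤ ‖a⋆a - 1‖`.
Finally `ε̂(T)` is attained, so one can take `η = ε̂(Tₙ) → 0`.
-/

section InnerProductSpace

variable {E : Type*} [NormedAddCommGroup E] [InnerProductSpace ℂ E]

lemma isAOP_one (T : E →L[ℂ] E) : IsAOP T 1 :=
  fun x y _ => by simpa using norm_inner_le_norm (𝕜 := ℂ) (T x) (T y)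

lemma isAOP_epsHat (T : E →L[ℂ] E) : IsAOP T (epsHat T) := by
  intro x y hxy
  rcases (mul_nonneg (norm_nonneg (T x)) (norm_nonneg (T y))).eq_or_lt with h0 | hpos
  · simpa [← h0] using norm_inner_le_norm (𝕜 := ℂ) (T x) (T y)
  · rw [← div_le_iff₀ hpos]
    exact le_csInf ⟨1, zero_le_one, le_rfl, isAOP_one T⟩ fun ε hε =>
      (div_le_iff₀ hpos).2 (hε.2.2 x y hxy)

lemma epsHat_nonneg (T : E →L[ℂ] E) : 0 ≤ epsHat T :=
  Real.sInf_nonneg fun _ hε => hε.1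

variable {T : E →L[ℂ] E} {η : ℝ}

lemma IsAOP.norm_sq_sub_norm_sq_le (hT : IsAOP T η) (hη : 0 ≤ η) {x y : E} (hxy : ⟪x, y⟫ = 0)
    (hn : ‖x‖ = ‖y‖) : ‖T x‖ ^ 2 - ‖T y‖ ^ 2 ≤ η * ‖T‖ ^ 2 * (‖x‖ ^ 2 + ‖y‖ ^ 2) := by
  have hyx : ⟪y, x⟫ = 0 := by rw [← inner_conj_symm, hxy, map_zero]
  have horth : ⟪x + y, x - y⟫ = 0 := by
    rw [inner_add_left, inner_sub_right, inner_sub_right, hxy, hyx,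
      inner_self_eq_norm_sq_to_K, inner_self_eq_norm_sq_to_K, hn]
    ring
  have hre : (⟪T (x + y), T (x - y)⟫).re = ‖T x‖ ^ 2 - ‖T y‖ ^ 2 := by
    have hsymm := inner_re_symm (𝕜 := ℂ) (T x) (T y)
    have hTx := inner_self_eq_norm_sq (𝕜 := ℂ) (T x)
    have hTy := inner_self_eq_norm_sq (𝕜 := ℂ) (T y)
    simp only [RCLike.re_to_complex] at hsymm hTx hTy
    simp only [map_add, map_sub, inner_add_left, inner_sub_right, Complex.add_re, Complex.sub_re]
    linarith
  have hadd : ‖x + y‖ ^ 2 = ‖x‖ ^ 2 + ‖y‖ ^ 2 := by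
    rw [sq, sq, sq, norm_add_sq_eq_norm_sq_add_norm_sq_of_inner_eq_zero (𝕜 := ℂ) x y hxy]
  have hsub : ‖x - y‖ ^ 2 = ‖x‖ ^ 2 + ‖y‖ ^ 2 := by
    rw [sub_eq_add_neg, sq, sq, sq, norm_add_sq_eq_norm_sq_add_norm_sq_of_inner_eq_zero (𝕜 := ℂ)
      x (-y) (by rw [inner_neg_right, hxy, neg_zero]), norm_neg]
  calc ‖T x‖ ^ 2 - ‖T y‖ ^ 2 ≤ ‖⟪T (x + y), T (x - y)⟫‖ := hre ▸ Complex.re_le_norm _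
    _ ≤ η * (‖T (x + y)‖ * ‖T (x - y)‖) := hT _ _ horth
    _ ≤ η * ((‖T‖ * ‖x + y‖) * (‖T‖ * ‖x - y‖)) := by gcongr <;> exact T.le_opNorm _
    _ = η * ‖T‖ ^ 2 * (‖x‖ ^ 2 + ‖y‖ ^ 2) := by
      rw [(sq_eq_sq₀ (norm_nonneg _) (norm_nonneg _)).1 (hsub.trans hadd.symm), ← hadd]
      ring

lemma IsAOP.sq_norm_mul_sq_norm_apply_le (hT : IsAOP T η) (hη : 0 ≤ η) {x : E} (hx : ‖x‖ = 1)
    (y : E) : ‖y‖ ^ 2 * ‖T x‖ ^ 2 ≤ ‖T y‖ ^ 2 + 3 * η * ‖T‖ ^ 2 * ‖y‖ ^ 2 := by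
  set α := ⟪x, y⟫
  set w := y - α • x
  have hxw : ⟪x, w⟫ = 0 := by
    rw [inner_sub_right, inner_smul_right, inner_self_eq_norm_sq_to_K, hx]
    simp [α]
  have hαxw : ⟪α • x, w⟫ = 0 := by rw [inner_smul_left, hxw, mul_zero]
  have hy : y = α • x + w := by simp [w]
  have hpyth : ‖y‖ ^ 2 = ‖α‖ ^ 2 + ‖w‖ ^ 2 := by
    rw [hy, sq, sq, sq, norm_add_sq_eq_norm_sq_add_norm_sq_of_inner_eq_zero (𝕜 := ℂ) _ _ hαxw,
      norm_smul, hx, mul_one]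
  -- compare `T x` with `T w` through the vector `‖w‖ • x` of the same length as `w`
  have hwx : ‖(‖w‖ : ℂ) • x‖ = ‖w‖ := by simp [norm_smul, hx]
  have hpar := hT.norm_sq_sub_norm_sq_le hη (x := (‖w‖ : ℂ) • x) (y := w)
    (by rw [inner_smul_left, hxw, mul_zero]) hwx
  rw [hwx, map_smul, norm_smul, Complex.norm_real, norm_norm] at hpar
  have hTx : ‖T x‖ ≤ ‖T‖ := by simpa [hx] using T.le_opNorm x
  have hcross : ‖⟪T x, T w⟫‖ ≤ η * (‖T‖ * (‖T‖ * ‖w‖)) :=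
    (hT x w hxw).trans (by gcongr; exact T.le_opNorm w)
  have hexp : ‖T y‖ ^ 2 = ‖α‖ ^ 2 * ‖T x‖ ^ 2 + 2 * (⟪α • T x, T w⟫).re + ‖T w‖ ^ 2 := by
    rw [hy, map_add, map_smul, norm_add_sq (𝕜 := ℂ), RCLike.re_to_complex, norm_smul]
    ring
  have hre : -(‖α‖ * ‖⟪T x, T w⟫‖) ≤ (⟪α • T x, T w⟫).re := by
    rw [inner_smul_left]
    have := (abs_le.mp (Complex.abs_re_le_norm (starRingEnd ℂ α * ⟪T x, T w⟫))).1
    rwa [norm_mul, Complex.norm_conj] at this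
  rw [hpyth]
  have hηT : 0 ≤ η * ‖T‖ ^ 2 := by positivity
  nlinarith [mul_le_mul_of_nonneg_left hcross (norm_nonneg α),
    mul_nonneg hηT (sq_nonneg (‖α‖ - ‖w‖)), mul_nonneg hηT (sq_nonneg ‖α‖)]

lemma IsAOP.sq_opNorm_mul_sq_norm_le (hT : IsAOP T η) (hη : 0 ≤ η) (y : E) :
    ‖T‖ ^ 2 * ‖y‖ ^ 2 ≤ ‖T y‖ ^ 2 + 3 * η * ‖T‖ ^ 2 * ‖y‖ ^ 2 := by
  have key : ‖(‖y‖ : ℂ) • T‖ ≤ √(‖T y‖ ^ 2 + 3 * η * ‖T‖ ^ 2 * ‖y‖ ^ 2) :=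
    ContinuousLinearMap.opNorm_le_of_unit_norm (Real.sqrt_nonneg _) fun x hx =>
      Real.le_sqrt_of_sq_le <| by
        simpa [norm_smul, mul_pow] using hT.sq_norm_mul_sq_norm_apply_le hη hx y
  rw [norm_smul, Complex.norm_real, norm_norm, Real.le_sqrt (by positivity) (by positivity)] at key
  linarith

lemma abs_sq_norm_inv_smul_apply_sub_le {c lam : ℝ} (hc : 0 < c)
    (hT : ∀ x, c * ‖T‖ ^ 2 * ‖x‖ ^ 2 ≤ ‖T x‖ ^ 2) (hlam0 : 0 < lam)
    (hlam : c * ‖T‖ ^ 2 ≤ lam ^ 2) (hlamT : lam ≤ ‖T‖) (x : E) :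
    |‖((lam : ℂ)⁻¹ • T) x‖ ^ 2 - ‖x‖ ^ 2| ≤ (c⁻¹ - 1) * ‖x‖ ^ 2 := by
  have happ : ‖((lam : ℂ)⁻¹ • T) x‖ ^ 2 = ‖T x‖ ^ 2 / lam ^ 2 := by
    rw [smul_apply, norm_smul, norm_inv, Complex.norm_real,
      Real.norm_of_nonneg hlam0.le, inv_mul_eq_div, div_pow]
  have hupper : ‖T x‖ ^ 2 ≤ c⁻¹ * (lam ^ 2 * ‖x‖ ^ 2) := by
    rw [le_inv_mul_iff₀ hc]
    calc c * ‖T x‖ ^ 2 ≤ c * (‖T‖ * ‖x‖) ^ 2 := by gcongr; exact T.le_opNorm x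
      _ = c * ‖T‖ ^ 2 * ‖x‖ ^ 2 := by ring
      _ ≤ lam ^ 2 * ‖x‖ ^ 2 := by gcongr
  have hlower : c * lam ^ 2 * ‖x‖ ^ 2 ≤ ‖T x‖ ^ 2 := by
    refine le_trans ?_ (hT x)
    gcongr
  rw [happ, abs_le]
  constructor
  · have h1 : c * ‖x‖ ^ 2 ≤ ‖T x‖ ^ 2 / lam ^ 2 := by rw [le_div_iff₀ (by positivity)]; linarith
    have h2 : 1 - c⁻¹ ≤ c - 1 := by
      field_simp
      nlinarith [sq_nonneg (c - 1)]
    nlinarith [mul_le_mul_of_nonneg_right h2 (sq_nonneg ‖x‖)]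
  · have h1 : ‖T x‖ ^ 2 / lam ^ 2 ≤ c⁻¹ * ‖x‖ ^ 2 := by
      rw [div_le_iff₀ (by positivity)]; linarith
    linarith

end InnerProductSpace

lemma Real.abs_sqrt_sub_one_le {t : ℝ} (ht : 0 ≤ t) : |√t - 1| ≤ |t - 1| := by
  conv_rhs => rw [← Real.sq_sqrt ht]
  rw [show √t ^ 2 - 1 = (√t - 1) * (√t + 1) by ring, abs_mul]
  exact le_mul_of_one_le_right (abs_nonneg _)
    (by rw [abs_of_nonneg (by positivity)]; linarith [Real.sqrt_nonneg t])

section CStar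

variable {A : Type*} [CStarAlgebra A]

lemma IsSelfAdjoint.abs_sub_one_le_of_mem_spectrum {p : A} (hp : IsSelfAdjoint p) {t : ℝ}
    (ht : t ∈ spectrum ℝ p) : |t - 1| ≤ ‖p - 1‖ := by
  have := norm_apply_le_norm_cfc (fun t : ℝ => t - 1) p ht
  rwa [cfc_sub _ _, cfc_id' ℝ p, cfc_const_one ℝ p] at this

theorem exists_star_mul_self_eq_one_norm_sub_le (a : A) (h : ‖star a * a - 1‖ < 1) :
    ∃ v : A, star v * v = 1 ∧ ‖a - v‖ ≤ ‖star a * a - 1‖ := by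
  nontriviality A
  set p := star a * a
  have hp : IsSelfAdjoint p := .star_mul_self a
  have hpos : ∀ t ∈ spectrum ℝ p, 0 < t := fun t ht => by
    have := hp.abs_sub_one_le_of_mem_spectrum ht
    by_contra! h'
    rw [abs_of_nonpos (by linarith)] at this
    linarith
  have hinv : ContinuousOn (fun t : ℝ => (√t)⁻¹) (spectrum ℝ p) :=
    Real.continuous_sqrt.continuousOn.inv₀ fun t ht => (Real.sqrt_pos.2 (hpos t ht)).ne'
  set b := cfc Real.sqrt p
  set c := cfc (fun t : ℝ => (√t)⁻¹) p
  have hbb : b * b = p := by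
    rw [← cfc_mul _ _ p]
    conv_rhs => rw [← cfc_id' ℝ p]
    exact cfc_congr fun t ht => Real.mul_self_sqrt (hpos t ht).le
  have hbc : b * c = 1 := by
    rw [← cfc_mul _ _ p (hg := hinv), ← cfc_const_one ℝ p]
    exact cfc_congr fun t ht => mul_inv_cancel₀ (Real.sqrt_pos.2 (hpos t ht)).ne'
  have hcb : c * b = 1 := by
    rw [← cfc_mul _ _ p (hf := hinv), ← cfc_const_one ℝ p]
    exact cfc_congr fun t ht => inv_mul_cancel₀ (Real.sqrt_pos.2 (hpos t ht)).ne'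
  have hc : star c = c := (cfc_predicate (R := ℝ) _ p : IsSelfAdjoint c).star_eq
  have hb1 : ‖b - 1‖ ≤ ‖p - 1‖ := by
    rw [show b - 1 = cfc (fun t : ℝ => √t - 1) p by rw [cfc_sub _ _, cfc_const_one ℝ p]]
    refine norm_cfc_le (norm_nonneg _) fun t ht => ?_
    exact (Real.abs_sqrt_sub_one_le (hpos t ht).le).trans (hp.abs_sub_one_le_of_mem_spectrum ht)
  have hv : star (a * c) * (a * c) = 1 :=
    calc star (a * c) * (a * c) = c * (b * b) * c := by
          rw [star_mul, hc, hbb]; simp only [p, mul_assoc]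
      _ = 1 := by rw [← mul_assoc, hcb, one_mul, hbc]
  have hv1 : ‖a * c‖ = 1 := by
    have := CStarRing.norm_star_mul_self (x := a * c)
    rw [hv, norm_one] at this
    nlinarith [norm_nonneg (a * c)]
  refine ⟨a * c, hv, ?_⟩
  calc ‖a - a * c‖ = ‖a * c * (b - 1)‖ := by
          rw [mul_sub, mul_one, mul_assoc, hcb, mul_one]
      _ ≤ ‖a * c‖ * ‖b - 1‖ := norm_mul_le _ _
      _ ≤ ‖p - 1‖ := by rw [hv1, one_mul]; exact hb1

end CStar

lemma norm_star_mul_self_sub_one_le {A : H →L[ℂ] H} {δ : ℝ} (hδ : 0 ≤ δ)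
    (h : ∀ x, |‖A x‖ ^ 2 - ‖x‖ ^ 2| ≤ δ * ‖x‖ ^ 2) : ‖star A * A - 1‖ ≤ δ := by
  rw [ContinuousLinearMap.norm_eq_iSup_rayleighQuotient _
    ((IsSelfAdjoint.star_mul_self A).sub (.one _)).isSymmetric]
  refine ciSup_le fun x => ?_
  have hre : (star A * A - 1).reApplyInnerSelf x = ‖A x‖ ^ 2 - ‖x‖ ^ 2 := by
    rw [ContinuousLinearMap.reApplyInnerSelf_apply, sub_apply,
      mul_apply_eq_comp, one_apply_eq_self, inner_sub_left,
      ContinuousLinearMap.star_eq_adjoint, ContinuousLinearMap.adjoint_inner_left, map_sub,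
      inner_self_eq_norm_sq, inner_self_eq_norm_sq]
  rw [ContinuousLinearMap.rayleighQuotient, hre, abs_div, abs_sq]
  exact div_le_of_le_mul₀ (sq_nonneg _) hδ (h x)

lemma distV_le_norm_star_mul_self_sub_one (A : H →L[ℂ] H) (h : ‖star A * A - 1‖ < 1) :
    distV A ≤ ‖star A * A - 1‖ := by
  obtain ⟨V, hV, hAV⟩ := exists_star_mul_self_eq_one_norm_sub_le A h
  have hVmem : V ∈ isoms H := (ContinuousLinearMap.norm_map_iff_adjoint_comp_self V).2 <| by
    rwa [← ContinuousLinearMap.star_eq_adjoint]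
  exact (Metric.infDist_le_dist_of_mem hVmem).trans (by rwa [dist_eq_norm])

lemma distV_inv_smul_le {T : H →L[ℂ] H} {η lam : ℝ} (hT : IsAOP T η) (hη : 0 ≤ η)
    (hη' : η < 1 / 6) (hT0 : T ≠ 0) (hlam : lam ∈ Set.Icc (minMod T) ‖T‖) :
    distV ((lam : ℂ)⁻¹ • T) ≤ (1 - 3 * η)⁻¹ - 1 := by
  set c := 1 - 3 * η
  have hc : 0 < c := by linarith
  have hlow : ∀ x, c * ‖T‖ ^ 2 * ‖x‖ ^ 2 ≤ ‖T x‖ ^ 2 := fun x => by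
    linarith [hT.sq_opNorm_mul_sq_norm_le hη x]
  have : Nontrivial H := by
    by_contra h
    rw [not_nontrivial_iff_subsingleton] at h
    exact hT0 (ContinuousLinearMap.ext fun _ => Subsingleton.elim _ _)
  obtain ⟨u, hu⟩ := exists_norm_eq H zero_le_one
  have hmin : √c * ‖T‖ ≤ minMod T := by
    refine le_csInf ⟨_, u, hu, rfl⟩ ?_
    rintro _ ⟨x, hx, rfl⟩
    refine (pow_le_pow_iff_left₀ (by positivity) (norm_nonneg _) two_ne_zero).1 ?_
    simpa [mul_pow, Real.sq_sqrt hc.le, hx] using hlow x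
  have hlam0 : 0 < lam :=
    (mul_pos (Real.sqrt_pos.2 hc) (norm_pos_iff.2 hT0)).trans_le (hmin.trans hlam.1)
  have hlam2 : c * ‖T‖ ^ 2 ≤ lam ^ 2 := by
    simpa [mul_pow, Real.sq_sqrt hc.le] using
      pow_le_pow_left₀ (by positivity) (hmin.trans hlam.1) 2
  have hδ : ‖star ((lam : ℂ)⁻¹ • T) * ((lam : ℂ)⁻¹ • T) - 1‖ ≤ c⁻¹ - 1 :=
    norm_star_mul_self_sub_one_le (sub_nonneg.2 (one_le_inv₀ hc |>.2 (by linarith)))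
      (abs_sq_norm_inv_smul_apply_sub_le hc hlow hlam0 hlam2 hlam.2)
  have hδ1 : c⁻¹ - 1 < 1 := by
    rw [sub_lt_iff_lt_add, inv_lt_comm₀ hc (by norm_num)]
    linarith
  exact (distV_le_norm_star_mul_self_sub_one _ (hδ.trans_lt hδ1)).trans hδ

theorem distV_tendsto_zero'_general
    (Tn : ℕ → H →L[ℂ] H) (hTn : ∀ n, Tn n ≠ 0)
    (heps : Filter.Tendsto (fun n => epsHat (Tn n)) Filter.atTop (nhds 0))
    (lam : ℕ → ℝ) (hlam : ∀ n, lam n ∈ Set.Icc (minMod (Tn n)) ‖Tn n‖) :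
    Filter.Tendsto (fun n => distV (((lam n : ℂ))⁻¹ • Tn n)) Filter.atTop (nhds 0) := by
  have hbound : Filter.Tendsto (fun η : ℝ => (1 - 3 * η)⁻¹ - 1) (nhds 0) (nhds 0) := by
    have : ContinuousAt (fun η : ℝ => (1 - 3 * η)⁻¹ - 1) 0 := by fun_prop (disch := norm_num)
    simpa using this.tendsto
  refine squeeze_zero' (Filter.Eventually.of_forall fun _ => Metric.infDist_nonneg) ?_
    (hbound.comp heps)
  filter_upwards [heps.eventually (gt_mem_nhds (by norm_num : (0 : ℝ) < 1 / 6))] with n hn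
  exact distV_inv_smul_le (isAOP_epsHat _) (epsHat_nonneg _) hn (hTn n) (hlam n)

/-- If `ε̂(Tₙ) → 0` for nonzero `Tₙ` and `λₙ ∈ [m(Tₙ), ‖Tₙ‖]`, then `dist(Tₙ/λₙ, 𝒱) → 0`. -/
theorem distV_tendsto_zero' (hdim : 2 ≤ Module.rank ℂ H)
    (Tn : ℕ → H →L[ℂ] H) (hTn : ∀ n, Tn n ≠ 0)
    (heps : Filter.Tendsto (fun n => epsHat (Tn n)) Filter.atTop (nhds 0))
    (lam : ℕ → ℝ) (hlam : ∀ n, lam n ∈ Set.Icc (minMod (Tn n)) ‖Tn n‖) :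
    Filter.Tendsto (fun n => distV (((lam n : ℂ))⁻¹ • Tn n)) Filter.atTop (nhds 0) :=
  distV_tendsto_zero'_general Tn hTn heps lam hlam
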